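/- arXiv:math/0406134 — 3 statements merged into one kernel-verified Lean document; each statement's English description precedes it below -/
import Mathlib

section
/- Fix 1 ≤ k < n and suppose a real 2-uniform (n,k)-frame exists. Let p be a real number with p > 2 + √(5k(n−1)/(n−k)). Then every uniform real (n,k)-frame F satisfies e_2^p(F) ≥ k/n + c_{n,k}, with equality if and only if F is 2-uniform. If no real 2-uniform (n,k)-frame exists, then every uniform real (n,k)-frame F satisfies e_2^p(F) > k/n + c_{n,k}. -/
open Matrix
open scoped Classical

noncomputable section

namespace FramesErasures

/-- The constant `c_{n,k} = sqrt(k(n-k)/(n^2(n-1)))`. -/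
noncomputable def c (n k : ℕ) : ℝ :=
  Real.sqrt ((k : ℝ) * ((n : ℝ) - k) / ((n : ℝ) ^ 2 * ((n : ℝ) - 1)))

/-- Operator norm (ℓ²→ℓ²) of a square real matrix. -/
noncomputable def opNorm {k : ℕ} (A : Matrix (Fin k) (Fin k) ℝ) : ℝ :=
  ‖Matrix.toEuclideanCLM (𝕜 := ℝ) A‖

/-- The diagonal 0-1 matrix with 1's exactly at the positions in `S`. -/
def diagS {n : ℕ} (S : Finset (Fin n)) : Matrix (Fin n) (Fin n) ℝ :=
  Matrix.diagonal fun i => if i ∈ S then 1 else 0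

/-- `e_m^∞(F)`: the maximal norm of an error operator for `m` erasures. -/
noncomputable def errInf {n k : ℕ} (V : Matrix (Fin n) (Fin k) ℝ) (m : ℕ) : ℝ :=
  sSup {x : ℝ | ∃ S : Finset (Fin n), S.card = m ∧ x = opNorm (Vᵀ * diagS S * V)}

/-- `e_m^p(F)`: the ℓᵖ-average of the norms of the error operators for `m` erasures. -/
noncomputable def errP {n k : ℕ} (V : Matrix (Fin n) (Fin k) ℝ) (m : ℕ) (p : ℝ) : ℝ :=
  ((n.choose m : ℝ)⁻¹ *
      ∑ S ∈ Finset.univ.filter fun S : Finset (Fin n) => S.card = m,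
        opNorm (Vᵀ * diagS S * V) ^ p) ^ (1 / p)

/-- A Parseval frame is uniform if all diagonal Grammian entries equal `k/n`. -/
def Uniform (n k : ℕ) (V : Matrix (Fin n) (Fin k) ℝ) : Prop :=
  ∀ j, (V * Vᵀ) j j = (k : ℝ) / n

/-- 2-uniformity, via the equiangularity characterization. -/
def TwoUniform (n k : ℕ) (V : Matrix (Fin n) (Fin k) ℝ) : Prop :=
  Uniform n k V ∧ ∀ i j, i ≠ j → |(V * Vᵀ) i j| = c n k

/-- The `n×n` all-ones matrix. -/
def Jmat (n : ℕ) : Matrix (Fin n) (Fin n) ℝ :=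
  Matrix.of fun _ _ => 1

/-- A real 2-uniform `(n,k)`-frame, given by its analysis operator and signature matrix. -/
structure TwoUniformFrame (n k : ℕ) where
  V : Matrix (Fin n) (Fin k) ℝ
  Q : Matrix (Fin n) (Fin n) ℝ
  parseval : Vᵀ * V = 1
  symm : Qᵀ = Q
  diag : ∀ i, Q i i = 0
  offdiag : ∀ i j, i ≠ j → Q i j = 1 ∨ Q i j = -1
  gram : V * Vᵀ = ((k : ℝ) / n) • (1 : Matrix (Fin n) (Fin n) ℝ) + c n k • Q

/-- The graph associated with a 2-uniform frame: `i ≠ j` adjacent iff `Q i j = -1`. -/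
def frameGraph {n k : ℕ} (F : TwoUniformFrame n k) : SimpleGraph (Fin n) where
  Adj i j := i ≠ j ∧ F.Q i j = -1
  symm := ⟨by
    intro i j h
    refine ⟨h.1.symm, ?_⟩
    have h2 : F.Q i j = F.Q j i := by
      have := congrFun (congrFun F.symm j) i
      simpa [Matrix.transpose_apply] using this
    rw [← h2]
    exact h.2⟩
  loopless := ⟨fun i h => h.1 rfl⟩

/-- A graph is complete bipartite (with one part possibly empty). -/
def IsCompleteBipartite {α : Type*} (G : SimpleGraph α) : Prop :=
  ∃ A : Set α, ∀ i j, G.Adj i j ↔ ((i ∈ A) ↔ (j ∉ A))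

/-- `G` has an induced complete bipartite subgraph on `m` vertices. -/
def HasInducedCompleteBipartite {n : ℕ} (G : SimpleGraph (Fin n)) (m : ℕ) : Prop :=
  ∃ S : Finset (Fin n), S.card = m ∧
    IsCompleteBipartite (G.induce (S : Set (Fin n)))

/-- The Seidel adjacency matrix of a graph. -/
noncomputable def seidel {α : Type*} [DecidableEq α] (G : SimpleGraph α) : Matrix α α ℝ :=
  Matrix.of fun i j => if i = j then 0 else if G.Adj i j then -1 else 1

/-- Switching equivalence of graphs: Seidel matrices conjugate by a product of a permutation
and a `±1` diagonal matrix. -/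
def SwitchingEquivalent {α : Type*} [DecidableEq α] (G H : SimpleGraph α) : Prop :=
  ∃ (σ : Equiv.Perm α) (ε : α → ℝ), (∀ i, ε i = 1 ∨ ε i = -1) ∧
    ∀ i j, seidel H i j = ε i * ε j * seidel G (σ i) (σ j)

/-- `G ∈ 𝒢_m^(s)`: the minimal number of edges in the switching class of `G` equals `s`. -/
def MinSwitchEdges {α : Type*} [DecidableEq α] (G : SimpleGraph α) (s : ℕ) : Prop :=
  IsLeast {t : ℕ | ∃ H : SimpleGraph α, SwitchingEquivalent G H ∧ H.edgeSet.ncard = t} s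

/-- `lam` is the largest eigenvalue of the real matrix `A`. -/
def IsMaxEigenvalue {m : ℕ} (A : Matrix (Fin m) (Fin m) ℝ) (lam : ℝ) : Prop :=
  (∃ v : Fin m → ℝ, v ≠ 0 ∧ A.mulVec v = lam • v) ∧
  ∀ μ : ℝ, (∃ v : Fin m → ℝ, v ≠ 0 ∧ A.mulVec v = μ • v) → μ ≤ lam

/-- A 2-uniform frame is 3-uniform if the error norm is the same for all triple erasures. -/
def ThreeUniform {n k : ℕ} (F : TwoUniformFrame n k) : Prop :=
  ∀ S T : Finset (Fin n), S.card = 3 → T.card = 3 →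
    opNorm (F.Vᵀ * diagS S * F.V) = opNorm (F.Vᵀ * diagS T * F.V)

/-!
For a uniform Parseval frame the error operator of the erased pair `{i, j}` has the same norm
as the Gram block `!![k/n, a; a, k/n]` with `a = ⟨f_i, f_j⟩`, namely `k/n + |a|`. Since the Gram
matrix is a rank-`k` projection, the squares `⟨f_i, f_j⟩²` sum over all pairs to exactly
`C(n,2) c_{n,k}²`. When `2 (k/n) < (p - 2) c_{n,k}`, which the bound on `p` guarantees,
`t ↦ (k/n + t)^p` lies strictly above its tangent line in the variable `t²` at `t = c_{n,k}`.
Averaging that tangent bound over the pairs gives `e_2^p(F)^p ≥ (k/n + c_{n,k})^p`, with equality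
iff `|⟨f_i, f_j⟩| = c_{n,k}` for every pair, i.e. iff `F` is 2-uniform.
-/

open Set in
theorem lt_of_strictConvexOn_deriv {φ φ' : ℝ → ℝ} {a c : ℝ}
    (hφ : ∀ x ∈ Icc a c, HasDerivAt φ (φ' x) x) (hφ' : StrictConvexOn ℝ (Icc a c) φ')
    (hc : φ' c = 0) (hca : φ c < φ a) {t : ℝ} (ht : t ∈ Ico a c) : φ c < φ t := by
  obtain ⟨hat, htc⟩ := ht
  have hcont : ContinuousOn φ (Icc a c) := fun x hx =>
    (hφ x hx).continuousAt.continuousWithinAt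
  have hφ'_lt {x y z : ℝ} (hx : a ≤ x) (hxy : x < y) (hyz : y < z) (hz : z ≤ c) :
      φ' y < max (φ' x) (φ' z) :=
    hφ'.lt_on_openSegment ⟨hx, hxy.le.trans (hyz.le.trans hz)⟩
      ⟨hx.trans (hxy.le.trans hyz.le), hz⟩ (hxy.trans hyz).ne
      (by rw [openSegment_eq_Ioo (hxy.trans hyz)]; exact ⟨hxy, hyz⟩)
  -- If `φ' t ≤ 0`, strict convexity forces `φ' < 0` on `(t, c)`; otherwise `φ' > 0` on `(a, t)`.
  rcases le_or_gt (φ' t) 0 with hneg | hpos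
  · have hanti : StrictAntiOn φ (Icc t c) := by
      refine strictAntiOn_of_deriv_neg (convex_Icc t c) (hcont.mono (Icc_subset_Icc_left hat))
        fun x hx => ?_
      rw [interior_Icc] at hx
      rw [(hφ x ⟨hat.trans hx.1.le, hx.2.le⟩).deriv]
      simpa [hc, hneg] using hφ'_lt hat hx.1 hx.2 le_rfl
    exact hanti (left_mem_Icc.2 htc.le) (right_mem_Icc.2 htc.le) htc
  · have hmono : StrictMonoOn φ (Icc a t) := by
      refine strictMonoOn_of_deriv_pos (convex_Icc a t) (hcont.mono (Icc_subset_Icc_right htc.le))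
        fun x hx => ?_
      rw [interior_Icc] at hx
      rw [(hφ x ⟨hx.1.le, hx.2.le.trans htc.le⟩).deriv]
      have := hφ'_lt hx.1.le hx.2 htc le_rfl
      rw [hc, lt_max_iff] at this
      rcases this with h | h <;> linarith
    exact hca.trans_le (hmono.monotoneOn (left_mem_Icc.2 hat) (right_mem_Icc.2 hat) hat)

open Set in
theorem lt_of_strictMonoOn_deriv {φ φ' : ℝ → ℝ} {c : ℝ}
    (hφ : ∀ x ∈ Ici c, HasDerivAt φ (φ' x) x) (hφ' : StrictMonoOn φ' (Ici c))
    (hc : φ' c = 0) {t : ℝ} (ht : c < t) : φ c < φ t := by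
  have hmono : StrictMonoOn φ (Ici c) := by
    refine strictMonoOn_of_deriv_pos (convex_Ici c)
      (fun x hx => (hφ x hx).continuousAt.continuousWithinAt) fun x hx => ?_
    rw [interior_Ici] at hx
    rw [(hφ x (mem_Ioi.1 hx).le).deriv, ← hc]
    exact hφ' self_mem_Ici (mem_Ioi.1 hx).le hx
  exact hmono self_mem_Ici ht.le ht

open Set in
theorem lt_of_strictMonoOn_deriv_deriv {φ φ' φ'' : ℝ → ℝ} {a c t : ℝ} (hac : a ≤ c)
    (hφ : ∀ x ∈ Ici a, HasDerivAt φ (φ' x) x) (hφ' : ∀ x ∈ Ici a, HasDerivAt φ' (φ'' x) x)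
    (hφ'' : StrictMonoOn φ'' (Ici a)) (hc : φ' c = 0) (hc' : 0 < φ'' c) (hca : φ c < φ a)
    (ht : a ≤ t) (htc : t ≠ c) : φ c < φ t := by
  rcases htc.lt_or_gt with hlt | hgt
  · refine lt_of_strictConvexOn_deriv (fun x hx => hφ x hx.1) ?_ hc hca ⟨ht, hlt⟩
    refine StrictMonoOn.strictConvexOn_of_deriv (convex_Icc a c)
      (fun x hx => (hφ' x hx.1).continuousAt.continuousWithinAt) ?_
    rw [interior_Icc]
    refine (hφ''.mono (Ioo_subset_Icc_self.trans Icc_subset_Ici_self)).congr fun x hx => ?_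
    exact (hφ' x hx.1.le).deriv.symm
  · refine lt_of_strictMonoOn_deriv (fun x hx => hφ x (hac.trans hx)) ?_ hc hgt
    refine strictMonoOn_of_deriv_pos (convex_Ici c)
      (fun x hx => (hφ' x (hac.trans hx)).continuousAt.continuousWithinAt) fun x hx => ?_
    rw [interior_Ici] at hx
    rw [(hφ' x (hac.trans (mem_Ioi.1 hx).le)).deriv]
    exact hc'.trans (hφ'' hac (hac.trans (mem_Ioi.1 hx).le) hx)

theorem hasDerivAt_add_rpow {b q x : ℝ} (hx : 0 < b + x) :
    HasDerivAt (fun t => (b + t) ^ q) (q * (b + x) ^ (q - 1)) x := by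
  simpa using ((hasDerivAt_id x).const_add b).rpow_const (p := q) (Or.inl hx.ne')

open Set in
theorem add_rpow_gt_sq_tangent {b c p t : ℝ} (hb : 0 < b) (hc : 0 < c)
    (hbc : 2 * b < (p - 2) * c) (ht : 0 ≤ t) (htc : t ≠ c) :
    (b + c) ^ p + p * (b + c) ^ (p - 1) / (2 * c) * (t ^ 2 - c ^ 2) < (b + t) ^ p := by
  set lam := p * (b + c) ^ (p - 1) / (2 * c) with hlam
  have hp : 2 < p := by nlinarith
  have hbc₀ : 0 < b + c := by linarith
  have hpow (q : ℝ) : (b + c) ^ (q + 1) = (b + c) ^ q * (b + c) := Real.rpow_add_one hbc₀.ne' q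
  set φ : ℝ → ℝ := fun t => (b + t) ^ p - lam * t ^ 2
  set φ' : ℝ → ℝ := fun t => p * (b + t) ^ (p - 1) - 2 * lam * t
  set φ'' : ℝ → ℝ := fun t => p * (p - 1) * (b + t) ^ (p - 2) - 2 * lam
  have hφ (x : ℝ) (hx : 0 ≤ x) : HasDerivAt φ (φ' x) x := by
    refine ((hasDerivAt_add_rpow (q := p) (by linarith)).sub
      ((hasDerivAt_pow 2 x).const_mul lam)).congr_deriv ?_
    simp only [φ']
    norm_num
    ring
  have hφ' (x : ℝ) (hx : 0 ≤ x) : HasDerivAt φ' (φ'' x) x := by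
    refine (((hasDerivAt_add_rpow (q := p - 1) (by linarith)).const_mul p).sub
      ((hasDerivAt_id x).const_mul (2 * lam))).congr_deriv ?_
    simp only [φ'']
    ring_nf
  have hφ'' : StrictMonoOn φ'' (Ici 0) := fun x hx y _ hxy => by
    have := Real.rpow_lt_rpow (by linarith [mem_Ici.1 hx]) (by linarith : b + x < b + y)
      (by linarith : 0 < p - 2)
    have hpp : 0 < p * (p - 1) := by nlinarith
    simp only [φ'']
    nlinarith [mul_lt_mul_of_pos_left this hpp]
  have hφ'c : φ' c = 0 := by
    simp only [φ', hlam]; field_simp; ring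
  have hφ''c : 0 < φ'' c := by
    have hlam_c : 2 * lam * c = p * (b + c) ^ (p - 2) * (b + c) := by
      rw [hlam, mul_assoc p, ← hpow]; field_simp; ring_nf
    have : 2 * lam * c < p * (p - 1) * (b + c) ^ (p - 2) * c := by
      rw [hlam_c]; nlinarith [mul_pos (by linarith : 0 < p) (Real.rpow_pos_of_pos hbc₀ (p - 2))]
    simp only [φ'']
    nlinarith
  have hφc : φ c < φ 0 := by
    have : φ c = (b + c) ^ (p - 1) * (b + c - p * c / 2) := by
      simp only [φ, hlam]
      rw [show p = p - 1 + 1 by ring, hpow, add_sub_cancel_right]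
      field_simp
    rw [this, show φ 0 = b ^ p by simp [φ]]
    nlinarith [Real.rpow_pos_of_pos hb p, Real.rpow_pos_of_pos hbc₀ (p - 1)]
  have := lt_of_strictMonoOn_deriv_deriv hc.le hφ hφ' hφ'' hφ'c hφ''c hφc ht htc
  simp only [φ] at this
  linarith

theorem mul_transpose_self_apply_comm {m n : Type*} [Fintype n] (V : Matrix m n ℝ) (i j : m) :
    (V * Vᵀ) j i = (V * Vᵀ) i j := by
  simp only [mul_apply, transpose_apply, mul_comm]

theorem transpose_mul_diagS_mul {n m : ℕ} {ι : Type*} (V : Matrix (Fin n) ι ℝ)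
    {e : Fin m → Fin n} (he : Function.Injective e) :
    Vᵀ * diagS (Finset.univ.image e) * V = (V.submatrix e id)ᵀ * V.submatrix e id := by
  ext t s
  rw [mul_apply, mul_apply]
  simp only [diagS, mul_diagonal, transpose_apply, submatrix_apply, id, mul_ite, mul_one,
    mul_zero, ite_mul, zero_mul]
  rw [← Finset.sum_filter, Finset.filter_mem_eq_inter, Finset.univ_inter,
    Finset.sum_image fun _ _ _ _ h => he h]

section

open scoped Matrix.Norms.L2Operator

theorem _root_.Matrix.l2_opNorm_mul_conjTranspose_self {𝕜 m n : Type*} [RCLike 𝕜] [Fintype m]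
    [Fintype n] [DecidableEq m] [DecidableEq n] (A : Matrix m n 𝕜) : ‖A * Aᴴ‖ = ‖Aᴴ * A‖ := by
  have := l2_opNorm_conjTranspose_mul_self Aᴴ
  rwa [conjTranspose_conjTranspose, l2_opNorm_conjTranspose,
    ← l2_opNorm_conjTranspose_mul_self] at this

theorem _root_.Matrix.l2_opNorm_swap_two : ‖!![(0 : ℝ), 1; 1, 0]‖ = 1 :=
  CStarRing.norm_of_mem_unitary <| Unitary.mem_iff.2 <| by
    constructor <;> ext i j <;> fin_cases i <;> fin_cases j <;> simp [Matrix.mul_apply, star]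

theorem _root_.Matrix.l2_opNorm_symm_two {a b : ℝ} (hb : 0 ≤ b) : ‖!![b, a; a, b]‖ = b + |a| := by
  apply le_antisymm
  · have hsplit : !![b, a; a, b] = b • (1 : Matrix (Fin 2) (Fin 2) ℝ) + a • !![0, 1; 1, 0] := by
      ext i j; fin_cases i <;> fin_cases j <;> simp
    calc ‖!![b, a; a, b]‖ ≤ ‖b • (1 : Matrix (Fin 2) (Fin 2) ℝ)‖ + ‖a • !![(0 : ℝ), 1; 1, 0]‖ :=
          hsplit ▸ norm_add_le _ _
      _ = b + |a| := by
          rw [norm_smul, norm_smul, norm_one, l2_opNorm_swap_two, Real.norm_of_nonneg hb,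
            Real.norm_eq_abs, mul_one, mul_one]
  · obtain ⟨s, hs, hsa⟩ : ∃ s : ℝ, s * s = 1 ∧ s * a = |a| := by
      rcases le_or_gt 0 a with h | h
      · exact ⟨1, by norm_num, by rw [abs_of_nonneg h, one_mul]⟩
      · exact ⟨-1, by norm_num, by rw [abs_of_neg h, neg_one_mul]⟩
    set x : EuclideanSpace ℝ (Fin 2) := WithLp.toLp 2 ![1, s]
    have hx : x ≠ 0 := fun h => by simpa [x] using congrArg (fun y => y 0) h
    have heig : !![b, a; a, b] *ᵥ x.ofLp = (b + |a|) • x.ofLp := by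
      ext i; fin_cases i
      · simp [x, Matrix.mulVec, dotProduct]; linear_combination hsa
      · simp [x, Matrix.mulVec, dotProduct]; linear_combination (-a) * hs + s * hsa
    have hbound := l2_opNorm_mulVec !![b, a; a, b] x
    have hx' : (EuclideanSpace.equiv (Fin 2) ℝ).symm x.ofLp = x := rfl
    rw [heig, map_smul, hx', norm_smul, Real.norm_of_nonneg (by positivity)] at hbound
    exact le_of_mul_le_mul_right hbound (norm_pos_iff.2 hx)

theorem opNorm_erasure_pair {n k : ℕ} (V : Matrix (Fin n) (Fin k) ℝ) {i j : Fin n} (hij : i ≠ j)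
    {b : ℝ} (hb : 0 ≤ b) (hi : (V * Vᵀ) i i = b) (hj : (V * Vᵀ) j j = b) :
    opNorm (Vᵀ * diagS {i, j} * V) = b + |(V * Vᵀ) i j| := by
  have hpair : (Finset.univ.image ![i, j]) = {i, j} := by
    ext; simp [Fin.exists_fin_two, eq_comm]
  set A := V.submatrix ![i, j] id
  have hgram : A * Aᴴ = !![b, (V * Vᵀ) i j; (V * Vᵀ) i j, b] := by
    rw [conjTranspose_eq_transpose_of_trivial, transpose_submatrix,
      ← submatrix_mul _ _ _ _ _ Function.bijective_id]
    ext r s; fin_cases r <;> fin_cases s <;> simp [hi, hj, mul_transpose_self_apply_comm V i j]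
  have hinj : Function.Injective ![i, j] := by
    intro r s; fin_cases r <;> fin_cases s <;> simp [hij, hij.symm]
  rw [opNorm, l2_opNorm_toEuclideanCLM, ← hpair, transpose_mul_diagS_mul V hinj,
    ← conjTranspose_eq_transpose_of_trivial, ← l2_opNorm_mul_conjTranspose_self, hgram,
    l2_opNorm_symm_two hb]

end

theorem sum_offDiag_pair_eq_two_nsmul {α M : Type*} [Fintype α] [DecidableEq α]
    [AddCommMonoid M] (f : Finset α → M) :
    ∑ q ∈ Finset.univ.offDiag, f {q.1, q.2} =
      2 • ∑ S ∈ Finset.univ.filter fun S : Finset α => S.card = 2, f S := by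
  have hmaps : ∀ q ∈ (Finset.univ : Finset α).offDiag,
      ({q.1, q.2} : Finset α) ∈ Finset.univ.filter fun S : Finset α => S.card = 2 := fun q hq =>
    Finset.mem_filter.2 ⟨Finset.mem_univ _, Finset.card_pair (Finset.mem_offDiag.1 hq).2.2⟩
  rw [← Finset.sum_fiberwise_of_maps_to hmaps, Finset.smul_sum]
  refine Finset.sum_congr rfl fun S hS => ?_
  rw [Finset.sum_congr rfl fun q hq => congrArg f (Finset.mem_filter.1 hq).2, Finset.sum_const]
  obtain ⟨a, b, hab, rfl⟩ := Finset.card_eq_two.1 (Finset.mem_filter.1 hS).2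
  congr 1
  rw [← Finset.card_pair (a := (a, b)) (b := (b, a)) (by simp [hab])]
  congr 1
  ext ⟨x, y⟩
  simp only [Finset.mem_filter, Finset.mem_offDiag, Finset.mem_univ, true_and,
    Finset.mem_insert, Finset.mem_singleton, Prod.mk.injEq, ← Finset.coe_inj,
    Finset.coe_pair, Set.pair_eq_pair_iff]
  constructor
  · exact And.right
  · rintro (⟨rfl, rfl⟩ | ⟨rfl, rfl⟩)
    exacts [⟨hab, .inl ⟨rfl, rfl⟩⟩, ⟨hab.symm, .inr ⟨rfl, rfl⟩⟩]

theorem sum_sq_mul_transpose_self {m n : Type*} [Fintype m] [Fintype n] [DecidableEq n]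
    (V : Matrix m n ℝ) (hV : Vᵀ * V = 1) : ∑ i, ∑ j, (V * Vᵀ) i j ^ 2 = Fintype.card n := by
  have hidem : V * Vᵀ * (V * Vᵀ) = V * Vᵀ := by
    rw [Matrix.mul_assoc, ← Matrix.mul_assoc Vᵀ, hV, Matrix.one_mul]
  calc ∑ i, ∑ j, (V * Vᵀ) i j ^ 2 = trace (V * Vᵀ * (V * Vᵀ)) := by
        simp only [trace, diag, mul_apply (M := V * Vᵀ), sq]
        exact Finset.sum_congr rfl fun i _ => Finset.sum_congr rfl fun j _ => by
          rw [mul_transpose_self_apply_comm V j i]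
    _ = Fintype.card n := by rw [hidem, trace_mul_comm, hV, trace_one]

theorem sum_offDiag_sq_mul_transpose_self {m n : Type*} [Fintype m] [DecidableEq m]
    [Fintype n] [DecidableEq n] (V : Matrix m n ℝ) (hV : Vᵀ * V = 1) {b : ℝ}
    (hdiag : ∀ i, (V * Vᵀ) i i = b) :
    ∑ q ∈ Finset.univ.offDiag, (V * Vᵀ) q.1 q.2 ^ 2 = Fintype.card n - Fintype.card m * b ^ 2 := by
  have := sum_sq_mul_transpose_self V hV
  rw [← Finset.sum_product', ← Finset.diag_union_offDiag,
    Finset.sum_union (Finset.disjoint_diag_offDiag _), Finset.sum_diag] at this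
  simp only [hdiag, Finset.sum_const, Finset.card_univ, nsmul_eq_mul] at this
  linarith

theorem c_sq {n k : ℕ} (hkn : k < n) :
    c n k ^ 2 = (k : ℝ) * ((n : ℝ) - k) / ((n : ℝ) ^ 2 * ((n : ℝ) - 1)) := by
  have : (k : ℝ) < n := by exact_mod_cast hkn
  have : (1 : ℝ) ≤ n := by exact_mod_cast hkn.trans_le' (Nat.zero_le k)
  exact Real.sq_sqrt (by positivity)

theorem c_pos {n k : ℕ} (hk : 1 ≤ k) (hkn : k < n) : 0 < c n k := by
  have : (1 : ℝ) ≤ k := by exact_mod_cast hk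
  have : (k : ℝ) < n := by exact_mod_cast hkn
  exact Real.sqrt_pos.2 (div_pos (mul_pos (by linarith) (by linarith))
    (mul_pos (pow_pos (by linarith) 2) (by linarith)))

theorem two_mul_div_lt_sub_two_mul_c {n k : ℕ} (hk : 1 ≤ k) (hkn : k < n) {p : ℝ}
    (hp : 2 + Real.sqrt (5 * (k : ℝ) * ((n : ℝ) - 1) / ((n : ℝ) - k)) < p) :
    2 * ((k : ℝ) / n) < (p - 2) * c n k := by
  have hk' : (1 : ℝ) ≤ k := by exact_mod_cast hk
  have hkn' : (k : ℝ) < n := by exact_mod_cast hkn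
  set R := 5 * (k : ℝ) * ((n : ℝ) - 1) / ((n : ℝ) - k)
  have hR : 0 ≤ R := div_nonneg (by nlinarith) (by linarith)
  -- `(√R * c n k)² = 5 (k/n)²`, while `(2 k/n)² = 4 (k/n)²`
  have hle : 2 * ((k : ℝ) / n) ≤ Real.sqrt R * c n k := by
    refine (pow_le_pow_iff_left₀ (by positivity)
      (mul_nonneg (Real.sqrt_nonneg R) (c_pos hk hkn).le) two_ne_zero).1 ?_
    rw [mul_pow, mul_pow, Real.sq_sqrt hR, c_sq hkn]
    have : (n : ℝ) - 1 ≠ 0 := by linarith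
    have : (n : ℝ) - k ≠ 0 := by linarith
    simp only [R]
    field_simp
    gcongr
    norm_num
  calc 2 * ((k : ℝ) / n) ≤ Real.sqrt R * c n k := hle
    _ < (p - 2) * c n k := mul_lt_mul_of_pos_right (by linarith) (c_pos hk hkn)

theorem card_filter_card_eq_two (n : ℕ) :
    ((Finset.univ.filter fun S : Finset (Fin n) => S.card = 2).card : ℝ) = n.choose 2 := by
  have : (Finset.univ.filter fun S : Finset (Fin n) => S.card = 2) =
      Finset.powersetCard 2 Finset.univ := by
    ext; simp
  rw [this, Finset.card_powersetCard, Finset.card_univ, Fintype.card_fin]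

theorem sum_sq_opNorm_erasure_pair_sub {n k : ℕ} (V : Matrix (Fin n) (Fin k) ℝ)
    (hV : Vᵀ * V = 1) (hU : Uniform n k V) :
    ∑ S ∈ Finset.univ.filter (fun S : Finset (Fin n) => S.card = 2),
      (opNorm (Vᵀ * diagS S * V) - k / n) ^ 2 = ((k : ℝ) - n * (k / n) ^ 2) / 2 := by
  have h := sum_offDiag_pair_eq_two_nsmul fun S : Finset (Fin n) =>
    (opNorm (Vᵀ * diagS S * V) - k / n) ^ 2
  rw [Finset.sum_congr rfl fun q hq => by
      rw [opNorm_erasure_pair V (Finset.mem_offDiag.1 hq).2.2 (by positivity) (hU _) (hU _),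
        add_sub_cancel_left, sq_abs],
    sum_offDiag_sq_mul_transpose_self V hV hU, Fintype.card_fin, Fintype.card_fin, two_nsmul] at h
  linarith

theorem card_mul_le_sum_of_forall_add_le {ι : Type*} {s : Finset ι} {f g : ι → ℝ} {a : ℝ}
    (h : ∀ i ∈ s, a + g i ≤ f i) (hg : ∑ i ∈ s, g i = 0) :
    s.card * a ≤ ∑ i ∈ s, f i ∧ (∑ i ∈ s, f i = s.card * a ↔ ∀ i ∈ s, f i = a + g i) := by
  have hsum : ∑ i ∈ s, (a + g i) = s.card * a := by
    rw [Finset.sum_add_distrib, hg, Finset.sum_const, nsmul_eq_mul, add_zero]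
  rw [← hsum, eq_comm]
  exact ⟨Finset.sum_le_sum h, (Finset.sum_eq_sum_iff_of_le h).trans
    (forall₂_congr fun _ _ => eq_comm)⟩

theorem twoUniform_iff_forall_opNorm_erasure_pair {n k : ℕ} {V : Matrix (Fin n) (Fin k) ℝ}
    (hU : Uniform n k V) :
    TwoUniform n k V ↔ ∀ S ∈ Finset.univ.filter (fun S : Finset (Fin n) => S.card = 2),
      opNorm (Vᵀ * diagS S * V) = k / n + c n k := by
  have hpair {i j : Fin n} (hij : i ≠ j) :
      opNorm (Vᵀ * diagS {i, j} * V) = k / n + |(V * Vᵀ) i j| :=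
    opNorm_erasure_pair V hij (by positivity) (hU i) (hU j)
  refine ⟨fun h S hS => ?_, fun h => ⟨hU, fun i j hij => ?_⟩⟩
  · obtain ⟨i, j, hij, rfl⟩ := Finset.card_eq_two.1 (Finset.mem_filter.1 hS).2
    rw [hpair hij, h.2 i j hij]
  · have := h {i, j} (Finset.mem_filter.2 ⟨Finset.mem_univ _, Finset.card_pair hij⟩)
    rw [hpair hij] at this
    linarith

theorem sum_rpow_opNorm_erasure_pair {n k : ℕ} (hk : 1 ≤ k) (hkn : k < n) {p : ℝ}
    (hpc : 2 * ((k : ℝ) / n) < (p - 2) * c n k) (V : Matrix (Fin n) (Fin k) ℝ)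
    (hV : Vᵀ * V = 1) (hU : Uniform n k V) :
    (n.choose 2 : ℝ) * ((k : ℝ) / n + c n k) ^ p ≤
        ∑ S ∈ Finset.univ.filter (fun S : Finset (Fin n) => S.card = 2),
          opNorm (Vᵀ * diagS S * V) ^ p ∧
      (∑ S ∈ Finset.univ.filter (fun S : Finset (Fin n) => S.card = 2),
          opNorm (Vᵀ * diagS S * V) ^ p = (n.choose 2 : ℝ) * ((k : ℝ) / n + c n k) ^ p ↔
        TwoUniform n k V) := by
  set P2 := Finset.univ.filter fun S : Finset (Fin n) => S.card = 2
  set b : ℝ := k / n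
  set F : Finset (Fin n) → ℝ := fun S => opNorm (Vᵀ * diagS S * V)
  set lam := p * (b + c n k) ^ (p - 1) / (2 * c n k)
  have hb : 0 < b := div_pos (by exact_mod_cast hk) (Nat.cast_pos.2 (by omega))
  have hc := c_pos hk hkn
  have hFb : ∀ S ∈ P2, 0 ≤ F S - b := fun S hS => by
    obtain ⟨i, j, hij, rfl⟩ := Finset.card_eq_two.1 (Finset.mem_filter.1 hS).2
    simp only [F, opNorm_erasure_pair V hij hb.le (hU i) (hU j), add_sub_cancel_left, abs_nonneg]
  have htangent : ∀ S ∈ P2,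
      (b + c n k) ^ p + lam * ((F S - b) ^ 2 - c n k ^ 2) ≤ F S ^ p ∧
        (F S ^ p = (b + c n k) ^ p + lam * ((F S - b) ^ 2 - c n k ^ 2) ↔ F S = b + c n k) := by
    intro S hS
    rcases eq_or_ne (F S - b) (c n k) with h | h
    · rw [h, sub_self, mul_zero, add_zero, ← h, add_sub_cancel]
      simp
    · have := add_rpow_gt_sq_tangent hb hc hpc (hFb S hS) h
      rw [add_sub_cancel] at this
      exact ⟨this.le, iff_of_false this.ne' fun h' => h (by rw [h', add_sub_cancel_left])⟩
  have hsum : ∑ S ∈ P2, lam * ((F S - b) ^ 2 - c n k ^ 2) = 0 := by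
    have : (1 : ℝ) < n := by exact_mod_cast hk.trans_lt hkn
    have : (n : ℝ) ≠ 0 := by linarith
    have : (n : ℝ) - 1 ≠ 0 := by linarith
    rw [← Finset.mul_sum, Finset.sum_sub_distrib, sum_sq_opNorm_erasure_pair_sub V hV hU,
      Finset.sum_const, nsmul_eq_mul, card_filter_card_eq_two, Nat.cast_choose_two, c_sq hkn]
    field_simp
    ring
  obtain ⟨hle, heq⟩ := card_mul_le_sum_of_forall_add_le (fun S hS => (htangent S hS).1) hsum
  rw [card_filter_card_eq_two] at hle heq
  rw [twoUniform_iff_forall_opNorm_erasure_pair hU, heq]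
  exact ⟨hle, forall₂_congr fun S hS => (htangent S hS).2⟩

theorem errP_two_ge_and_eq_iff {n k : ℕ} (hk : 1 ≤ k) (hkn : k < n) {p : ℝ}
    (hpc : 2 * ((k : ℝ) / n) < (p - 2) * c n k) (V : Matrix (Fin n) (Fin k) ℝ)
    (hV : Vᵀ * V = 1) (hU : Uniform n k V) :
    (k : ℝ) / n + c n k ≤ errP V 2 p ∧ (errP V 2 p = (k : ℝ) / n + c n k ↔ TwoUniform n k V) := by
  obtain ⟨hle, heq⟩ := sum_rpow_opNorm_erasure_pair hk hkn hpc V hV hU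
  have hc := c_pos hk hkn
  have hp : 0 < p := by
    have : (0 : ℝ) ≤ 2 * ((k : ℝ) / n) := by positivity
    nlinarith
  have hN : (0 : ℝ) < n.choose 2 := by exact_mod_cast Nat.choose_pos (by omega)
  have hsum : 0 ≤ ∑ S ∈ Finset.univ.filter (fun S : Finset (Fin n) => S.card = 2),
      opNorm (Vᵀ * diagS S * V) ^ p :=
    Finset.sum_nonneg fun S _ => Real.rpow_nonneg (norm_nonneg _) p
  rw [errP, one_div, Real.le_rpow_inv_iff_of_pos (by positivity) (by positivity) hp,
    Real.rpow_inv_eq (by positivity) (by positivity) hp.ne', le_inv_mul_iff₀ hN,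
    inv_mul_eq_iff_eq_mul₀ hN.ne', ← heq]
  exact ⟨hle, Iff.rfl⟩

theorem statement2 (n k : ℕ) (hk : 1 ≤ k) (hkn : k < n) (p : ℝ)
    (hp : 2 + Real.sqrt (5 * (k : ℝ) * ((n : ℝ) - 1) / ((n : ℝ) - k)) < p) :
    ((∃ W : Matrix (Fin n) (Fin k) ℝ, Wᵀ * W = 1 ∧ TwoUniform n k W) →
      ∀ V : Matrix (Fin n) (Fin k) ℝ, Vᵀ * V = 1 → Uniform n k V →
        ((k : ℝ) / n + c n k ≤ errP V 2 p ∧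
          (errP V 2 p = (k : ℝ) / n + c n k ↔ TwoUniform n k V))) ∧
    ((¬ ∃ W : Matrix (Fin n) (Fin k) ℝ, Wᵀ * W = 1 ∧ TwoUniform n k W) →
      ∀ V : Matrix (Fin n) (Fin k) ℝ, Vᵀ * V = 1 → Uniform n k V →
        (k : ℝ) / n + c n k < errP V 2 p) := by
  have hpc := two_mul_div_lt_sub_two_mul_c hk hkn hp
  refine ⟨fun _ V hV hU => errP_two_ge_and_eq_iff hk hkn hpc V hV hU, fun hno V hV hU => ?_⟩
  obtain ⟨hle, heq⟩ := errP_two_ge_and_eq_iff hk hkn hpc V hV hU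
  exact hle.lt_of_ne fun h => hno ⟨V, hV, heq.1 h.symm⟩

end FramesErasures
end
end

section
/- If F is a real 2-uniform (n,k)-frame, then e_2^2(G) ≤ e_2^2(F) for every uniform real (n,k)-frame G; i.e., 2-uniform frames maximize the error e_2^2 among uniform frames. Moreover, if there exists a uniform real (n,k)-frame that is not 2-uniform, then no minimizer of e_2^2 among uniform real (n,k)-frames is 2-uniform. -/
open Matrix
open scoped Classical

noncomputable section

namespace FramesErasures

/-!
The error operator of an erased pair `{i, j}` is the sum of the rank-one operators `f_i f_iᵀ` and
`f_j f_jᵀ`. When `‖f_i‖ = ‖f_j‖`, `f_i + f_j` and `f_i - f_j` are eigenvectors of it, and its norm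
is `‖f_i‖² + |⟪f_i, f_j⟫| = k/n + |G i j|`, where `G = V Vᵀ` is the Gram matrix. Hence `e_2^2(F)²`
is an increasing affine function of `∑_{i ≠ j} |G i j|`, with coefficients depending only on `n` and
`k`. Since `G` is an orthogonal projection of rank `k` with diagonal `k/n`, the sum
`∑_{i ≠ j} G i j ^ 2 = k - k²/n` is the same for all uniform frames. By Cauchy–Schwarz,
`∑_{i ≠ j} |G i j|` is therefore largest exactly when all `|G i j|` are equal, i.e. for 2-uniform
frames, and the inequality is strict for frames that are not 2-uniform.
-/

open InnerProductSpace (rankOne)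
open scoped RealInnerProductSpace

section RankTwo

variable {E : Type*} [NormedAddCommGroup E] [InnerProductSpace ℝ E]

theorem norm_rankOne_add_rankOne_le {u v : E} (h : ‖u‖ = ‖v‖) :
    ‖rankOne ℝ u u + rankOne ℝ v v‖ ≤ ‖u‖ ^ 2 + |⟪u, v⟫| := by
  refine ContinuousLinearMap.opNorm_le_bound _ (by positivity) fun x => ?_
  set T := rankOne ℝ u u + rankOne ℝ v v
  set P := ⟪u, x⟫
  set Q := ⟪v, x⟫
  have hTx : T x = P • u + Q • v := rfl
  have hnorm : ‖T x‖ ^ 2 = ‖u‖ ^ 2 * P ^ 2 + 2 * ⟪u, v⟫ * P * Q + ‖u‖ ^ 2 * Q ^ 2 := by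
    rw [hTx, norm_add_sq_real, norm_smul, norm_smul, real_inner_smul_left, real_inner_smul_right,
      Real.norm_eq_abs, Real.norm_eq_abs, mul_pow, mul_pow, sq_abs, sq_abs, h]
    ring
  have hinner : P ^ 2 + Q ^ 2 ≤ ‖T x‖ * ‖x‖ := by
    calc P ^ 2 + Q ^ 2 = ⟪T x, x⟫ := by
          rw [hTx, inner_add_left, real_inner_smul_left, real_inner_smul_left]; ring
      _ ≤ ‖T x‖ * ‖x‖ := real_inner_le_norm _ _
  have hquad : ‖T x‖ ^ 2 ≤ (‖u‖ ^ 2 + |⟪u, v⟫|) * (P ^ 2 + Q ^ 2) := by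
    rw [hnorm]
    rcases abs_cases ⟪u, v⟫ with ⟨hb, _⟩ | ⟨hb, _⟩ <;> rw [hb] <;>
      nlinarith [sq_nonneg (P - Q), sq_nonneg (P + Q)]
  have key : ‖T x‖ * ‖T x‖ ≤ (‖u‖ ^ 2 + |⟪u, v⟫|) * ‖x‖ * ‖T x‖ := by
    rw [← sq]
    nlinarith [mul_le_mul_of_nonneg_left hinner (by positivity : 0 ≤ ‖u‖ ^ 2 + |⟪u, v⟫|)]
  rcases (norm_nonneg (T x)).eq_or_lt with h0 | hpos
  · rw [← h0]; positivity
  · exact le_of_mul_le_mul_right key hpos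

theorem le_norm_rankOne_add_rankOne {u v : E} (h : ‖u‖ = ‖v‖) :
    ‖u‖ ^ 2 + ⟪u, v⟫ ≤ ‖rankOne ℝ u u + rankOne ℝ v v‖ := by
  set T := rankOne ℝ u u + rankOne ℝ v v
  rcases le_or_gt (‖u‖ ^ 2 + ⟪u, v⟫) 0 with hle | hpos
  · exact hle.trans (norm_nonneg T)
  have heig : T (u + v) = (‖u‖ ^ 2 + ⟪u, v⟫) • (u + v) := by
    simp only [T, _root_.add_apply, InnerProductSpace.rankOne_apply, inner_add_right,
      real_inner_self_eq_norm_sq, smul_add, add_smul, real_inner_comm u v, h]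
    abel
  have hnorm : 0 < ‖u + v‖ := by
    have : ‖u + v‖ ^ 2 = 2 * (‖u‖ ^ 2 + ⟪u, v⟫) := by rw [norm_add_sq_real, h]; ring
    nlinarith [norm_nonneg (u + v)]
  have := T.le_opNorm (u + v)
  rw [heig, norm_smul, Real.norm_of_nonneg hpos.le] at this
  exact le_of_mul_le_mul_right this hnorm

theorem norm_rankOne_add_rankOne {u v : E} (h : ‖u‖ = ‖v‖) :
    ‖rankOne ℝ u u + rankOne ℝ v v‖ = ‖u‖ ^ 2 + |⟪u, v⟫| := by
  refine le_antisymm (norm_rankOne_add_rankOne_le h) ?_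
  rcases le_total 0 ⟪u, v⟫ with hb | hb
  · rw [abs_of_nonneg hb]
    exact le_norm_rankOne_add_rankOne h
  · have hneg : rankOne ℝ (-v) (-v) = rankOne ℝ v v := by simp
    rw [abs_of_nonpos hb, ← inner_neg_right, ← hneg]
    exact le_norm_rankOne_add_rankOne (h.trans (norm_neg v).symm)

end RankTwo

theorem sum_offDiag_pair_eq {α M : Type*} [DecidableEq α] [AddCommMonoid M] (s : Finset α)
    (f : Finset α → M) :
    ∑ p ∈ s.offDiag, f {p.1, p.2} = 2 • ∑ S ∈ s.powersetCard 2, f S := by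
  have hmaps : ∀ p ∈ s.offDiag, ({p.1, p.2} : Finset α) ∈ s.powersetCard 2 := by
    intro p hp
    obtain ⟨h1, h2, hne⟩ := Finset.mem_offDiag.mp hp
    exact Finset.mem_powersetCard.mpr
      ⟨Finset.insert_subset h1 (Finset.singleton_subset_iff.mpr h2), Finset.card_pair hne⟩
  rw [← Finset.sum_fiberwise_of_maps_to hmaps, Finset.smul_sum]
  refine Finset.sum_congr rfl fun S hS => ?_
  obtain ⟨hSs, hcard⟩ := Finset.mem_powersetCard.mp hS
  have hfiber : {p ∈ s.offDiag | ({p.1, p.2} : Finset α) = S} = S.offDiag := by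
    ext ⟨a, b⟩
    simp only [Finset.mem_filter, Finset.mem_offDiag]
    constructor
    · rintro ⟨⟨-, -, hab⟩, rfl⟩
      simp [hab]
    · rintro ⟨ha, hb, hab⟩
      refine ⟨⟨hSs ha, hSs hb, hab⟩, Finset.eq_of_subset_of_card_le ?_ ?_⟩
      · exact Finset.insert_subset ha (Finset.singleton_subset_iff.mpr hb)
      · rw [hcard, Finset.card_pair hab]
  rw [Finset.sum_congr rfl fun p hp => congrArg f (Finset.mem_filter.mp hp).2, Finset.sum_const,
    hfiber, Finset.offDiag_card, hcard]

theorem sum_sq_sub_eq_of_sum_sq_eq {ι : Type*} {s : Finset ι} {x : ι → ℝ} {c : ℝ}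
    (h : ∑ i ∈ s, x i ^ 2 = s.card * c ^ 2) :
    ∑ i ∈ s, (x i - c) ^ 2 = 2 * c * (s.card * c - ∑ i ∈ s, x i) := by
  simp only [sub_sq, Finset.sum_add_distrib, Finset.sum_sub_distrib, h, ← Finset.sum_mul,
    ← Finset.mul_sum, Finset.sum_const, nsmul_eq_mul]
  ring

theorem sum_le_card_mul_of_sum_sq_eq {ι : Type*} {s : Finset ι} {x : ι → ℝ} {c : ℝ}
    (hc : 0 ≤ c) (h : ∑ i ∈ s, x i ^ 2 = s.card * c ^ 2) :
    ∑ i ∈ s, x i ≤ s.card * c := by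
  refine le_of_sq_le_sq ?_ (by positivity)
  calc (∑ i ∈ s, x i) ^ 2 ≤ s.card * ∑ i ∈ s, x i ^ 2 := sq_sum_le_card_mul_sum_sq
    _ = (s.card * c) ^ 2 := by rw [h]; ring

theorem sum_lt_card_mul_of_sum_sq_eq {ι : Type*} {s : Finset ι} {x : ι → ℝ} {c : ℝ}
    (hc : 0 ≤ c) (h : ∑ i ∈ s, x i ^ 2 = s.card * c ^ 2) (hne : ∃ i ∈ s, x i ≠ c) :
    ∑ i ∈ s, x i < s.card * c := by
  obtain ⟨i, hi, hxi⟩ := hne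
  have hpos : 0 < ∑ i ∈ s, (x i - c) ^ 2 :=
    Finset.sum_pos' (fun _ _ => sq_nonneg _) ⟨i, hi, by have := sub_ne_zero.mpr hxi; positivity⟩
  rw [sum_sq_sub_eq_of_sum_sq_eq h] at hpos
  linarith [pos_of_mul_pos_right hpos (by positivity)]

section Frames

variable {n k : ℕ}

theorem inner_toLp_row (W : Matrix (Fin n) (Fin k) ℝ) (i j : Fin n) :
    ⟪WithLp.toLp 2 (W i), WithLp.toLp 2 (W j)⟫ = (W * Wᵀ) i j := by
  simp [EuclideanSpace.inner_toLp_toLp, Matrix.mul_apply, dotProduct, mul_comm]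

theorem transpose_mul_diagS_mul_apply (W : Matrix (Fin n) (Fin k) ℝ) (S : Finset (Fin n))
    (p q : Fin k) : (Wᵀ * diagS S * W) p q = ∑ i ∈ S, W i p * W i q := by
  simp [diagS, Matrix.mul_apply, Matrix.diagonal_apply, Finset.sum_ite_mem]

theorem toEuclideanCLM_transpose_mul_diagS_mul (W : Matrix (Fin n) (Fin k) ℝ)
    (S : Finset (Fin n)) :
    Matrix.toEuclideanCLM (𝕜 := ℝ) (Wᵀ * diagS S * W) =
      ∑ i ∈ S, rankOne ℝ (WithLp.toLp 2 (W i)) (WithLp.toLp 2 (W i)) := by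
  ext x p
  simp only [Matrix.ofLp_toEuclideanCLM, Matrix.mulVec, dotProduct,
    transpose_mul_diagS_mul_apply, _root_.sum_apply, WithLp.ofLp_sum, Finset.sum_apply,
    InnerProductSpace.rankOne_apply, WithLp.ofLp_smul, Pi.smul_apply, smul_eq_mul,
    Finset.sum_mul]
  rw [Finset.sum_comm]
  refine Finset.sum_congr rfl fun i _ => ?_
  simp only [EuclideanSpace.inner_eq_star_dotProduct, dotProduct, star_trivial, Finset.sum_mul]
  exact Finset.sum_congr rfl fun q _ => by ring

theorem opNorm_transpose_mul_diagS_pair_mul {W : Matrix (Fin n) (Fin k) ℝ} (hu : Uniform n k W)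
    {i j : Fin n} (hij : i ≠ j) :
    opNorm (Wᵀ * diagS {i, j} * W) = k / n + |(W * Wᵀ) i j| := by
  have hnorm : ∀ l, ‖(WithLp.toLp 2 (W l) : EuclideanSpace ℝ (Fin k))‖ ^ 2 = k / n := fun l => by
    rw [← real_inner_self_eq_norm_sq, inner_toLp_row, hu]
  have hij_norm := (sq_eq_sq₀ (norm_nonneg _) (norm_nonneg _)).mp ((hnorm i).trans (hnorm j).symm)
  rw [opNorm, toEuclideanCLM_transpose_mul_diagS_mul, Finset.sum_pair hij,
    norm_rankOne_add_rankOne hij_norm, hnorm, inner_toLp_row]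

theorem sum_sum_gram_sq {W : Matrix (Fin n) (Fin k) ℝ} (hW : Wᵀ * W = 1) :
    ∑ i, ∑ j, (W * Wᵀ) i j ^ 2 = k := by
  have hsymm : (W * Wᵀ)ᵀ = W * Wᵀ := by rw [Matrix.transpose_mul, Matrix.transpose_transpose]
  have hidem : W * Wᵀ * (W * Wᵀ) = W * Wᵀ := by
    rw [Matrix.mul_assoc, ← Matrix.mul_assoc Wᵀ, hW, Matrix.one_mul]
  calc ∑ i, ∑ j, (W * Wᵀ) i j ^ 2 = (W * Wᵀ * (W * Wᵀ)ᵀ).trace := by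
        simp only [Matrix.trace, Matrix.diag_apply, Matrix.mul_apply (M := W * Wᵀ),
          Matrix.transpose_apply, sq]
    _ = k := by rw [hsymm, hidem, Matrix.trace_mul_comm, hW, Matrix.trace_one, Fintype.card_fin]

theorem sum_offDiag_gram_sq {W : Matrix (Fin n) (Fin k) ℝ} (hW : Wᵀ * W = 1)
    (hu : Uniform n k W) :
    ∑ p ∈ Finset.univ.offDiag, (W * Wᵀ) p.1 p.2 ^ 2 = k - n * (k / n : ℝ) ^ 2 := by
  have htotal := sum_sum_gram_sq hW
  rw [← Fintype.sum_prod_type' (f := fun i j => (W * Wᵀ) i j ^ 2), ← Finset.univ_product_univ,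
    ← Finset.univ.diag_union_offDiag, Finset.sum_union (Finset.disjoint_diag_offDiag _)] at htotal
  have hdiag : ∑ p ∈ Finset.univ.diag, (W * Wᵀ) p.1 p.2 ^ 2 = n * (k / n : ℝ) ^ 2 := by
    simp [Finset.diag, show ∀ j, (W * Wᵀ) j j = k / n from hu]
  linarith

def gramOffDiagAbsSum (W : Matrix (Fin n) (Fin k) ℝ) : ℝ :=
  ∑ p ∈ Finset.univ.offDiag, |(W * Wᵀ) p.1 p.2|

theorem errP_two_two (W : Matrix (Fin n) (Fin k) ℝ) :
    errP W 2 2 = √((n.choose 2 : ℝ)⁻¹ *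
      ∑ S ∈ Finset.univ.filter fun S : Finset (Fin n) => S.card = 2,
        opNorm (Wᵀ * diagS S * W) ^ 2) := by
  simp only [errP, Real.rpow_two, Real.sqrt_eq_rpow]

theorem two_mul_sum_opNorm_sq_pairs {W : Matrix (Fin n) (Fin k) ℝ} (hW : Wᵀ * W = 1)
    (hu : Uniform n k W) :
    2 * ∑ S ∈ Finset.univ.filter fun S : Finset (Fin n) => S.card = 2,
        opNorm (Wᵀ * diagS S * W) ^ 2 =
      (Finset.univ.offDiag (α := Fin n)).card * (k / n : ℝ) ^ 2 +
        2 * (k / n) * gramOffDiagAbsSum W + (k - n * (k / n : ℝ) ^ 2) := by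
  calc 2 * ∑ S ∈ Finset.univ.filter fun S : Finset (Fin n) => S.card = 2,
          opNorm (Wᵀ * diagS S * W) ^ 2
      = ∑ p ∈ Finset.univ.offDiag, opNorm (Wᵀ * diagS {p.1, p.2} * W) ^ 2 := by
        rw [sum_offDiag_pair_eq _ fun S => opNorm (Wᵀ * diagS S * W) ^ 2, nsmul_eq_mul,
          Nat.cast_ofNat, Finset.univ_filter_card_eq]
    _ = ∑ p ∈ Finset.univ.offDiag, (k / n + |(W * Wᵀ) p.1 p.2|) ^ 2 :=
        Finset.sum_congr rfl fun p hp => by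
          rw [opNorm_transpose_mul_diagS_pair_mul hu (Finset.mem_offDiag.mp hp).2.2]
    _ = _ := by
        simp only [add_sq, sq_abs, Finset.sum_add_distrib, Finset.sum_const, nsmul_eq_mul,
          ← Finset.mul_sum, sum_offDiag_gram_sq hW hu, gramOffDiagAbsSum]

theorem gramOffDiagAbsSum_of_twoUniform {V : Matrix (Fin n) (Fin k) ℝ} (hVt : TwoUniform n k V) :
    gramOffDiagAbsSum V = (Finset.univ.offDiag (α := Fin n)).card * c n k := by
  rw [gramOffDiagAbsSum, Finset.sum_congr rfl fun p hp => hVt.2 _ _ (Finset.mem_offDiag.mp hp).2.2,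
    Finset.sum_const, nsmul_eq_mul]

theorem sum_offDiag_abs_gram_sq_of_twoUniform {V W : Matrix (Fin n) (Fin k) ℝ}
    (hV : Vᵀ * V = 1) (hVt : TwoUniform n k V) (hW : Wᵀ * W = 1) (hWu : Uniform n k W) :
    ∑ p ∈ Finset.univ.offDiag, |(W * Wᵀ) p.1 p.2| ^ 2 =
      (Finset.univ.offDiag (α := Fin n)).card * c n k ^ 2 := by
  simp_rw [sq_abs]
  rw [sum_offDiag_gram_sq hW hWu, ← sum_offDiag_gram_sq hV hVt.1,
    Finset.sum_congr rfl fun p hp => by rw [← sq_abs, hVt.2 _ _ (Finset.mem_offDiag.mp hp).2.2],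
    Finset.sum_const, nsmul_eq_mul]

theorem gramOffDiagAbsSum_le_of_twoUniform {V W : Matrix (Fin n) (Fin k) ℝ}
    (hV : Vᵀ * V = 1) (hVt : TwoUniform n k V) (hW : Wᵀ * W = 1) (hWu : Uniform n k W) :
    gramOffDiagAbsSum W ≤ gramOffDiagAbsSum V := by
  rw [gramOffDiagAbsSum_of_twoUniform hVt]
  exact sum_le_card_mul_of_sum_sq_eq (Real.sqrt_nonneg _)
    (sum_offDiag_abs_gram_sq_of_twoUniform hV hVt hW hWu)

theorem gramOffDiagAbsSum_lt_of_twoUniform {V W : Matrix (Fin n) (Fin k) ℝ}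
    (hV : Vᵀ * V = 1) (hVt : TwoUniform n k V) (hW : Wᵀ * W = 1) (hWu : Uniform n k W)
    {i j : Fin n} (hij : i ≠ j) (hne : |(W * Wᵀ) i j| ≠ c n k) :
    gramOffDiagAbsSum W < gramOffDiagAbsSum V := by
  rw [gramOffDiagAbsSum_of_twoUniform hVt]
  exact sum_lt_card_mul_of_sum_sq_eq (Real.sqrt_nonneg _)
    (sum_offDiag_abs_gram_sq_of_twoUniform hV hVt hW hWu)
    ⟨(i, j), Finset.mem_offDiag.mpr ⟨Finset.mem_univ _, Finset.mem_univ _, hij⟩, hne⟩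

theorem errP_two_two_le_of_twoUniform {V W : Matrix (Fin n) (Fin k) ℝ}
    (hV : Vᵀ * V = 1) (hVt : TwoUniform n k V) (hW : Wᵀ * W = 1) (hWu : Uniform n k W) :
    errP W 2 2 ≤ errP V 2 2 := by
  have hW2 := two_mul_sum_opNorm_sq_pairs hW hWu
  have hV2 := two_mul_sum_opNorm_sq_pairs hV hVt.1
  have hF := mul_le_mul_of_nonneg_left (gramOffDiagAbsSum_le_of_twoUniform hV hVt hW hWu)
    (by positivity : (0 : ℝ) ≤ k / n)
  rw [errP_two_two, errP_two_two]
  refine Real.sqrt_le_sqrt (mul_le_mul_of_nonneg_left ?_ (by positivity))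
  linarith

theorem errP_two_two_lt_of_twoUniform {V W : Matrix (Fin n) (Fin k) ℝ}
    (hV : Vᵀ * V = 1) (hVt : TwoUniform n k V) (hW : Wᵀ * W = 1) (hWu : Uniform n k W)
    {i j : Fin n} (hij : i ≠ j) (hne : |(W * Wᵀ) i j| ≠ c n k) :
    errP W 2 2 < errP V 2 2 := by
  have hk : k ≠ 0 := by
    rintro rfl
    exact hne (by simp [c, Matrix.mul_apply])
  have hn : 2 ≤ n := Fin.nontrivial_iff_two_le.mp ⟨i, j, hij⟩
  have hW2 := two_mul_sum_opNorm_sq_pairs hW hWu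
  have hV2 := two_mul_sum_opNorm_sq_pairs hV hVt.1
  have hF := mul_lt_mul_of_pos_left (gramOffDiagAbsSum_lt_of_twoUniform hV hVt hW hWu hij hne)
    (by positivity : (0 : ℝ) < k / n)
  have hchoose : (0 : ℝ) < n.choose 2 := by exact_mod_cast Nat.choose_pos hn
  rw [errP_two_two, errP_two_two]
  refine Real.sqrt_lt_sqrt (by positivity) (mul_lt_mul_of_pos_left ?_ (by positivity))
  linarith

end Frames

theorem statement4 (n k : ℕ) :
    (∀ V : Matrix (Fin n) (Fin k) ℝ, Vᵀ * V = 1 → TwoUniform n k V →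
      ∀ W : Matrix (Fin n) (Fin k) ℝ, Wᵀ * W = 1 → Uniform n k W →
        errP W 2 2 ≤ errP V 2 2) ∧
    ((∃ W : Matrix (Fin n) (Fin k) ℝ, Wᵀ * W = 1 ∧ Uniform n k W ∧ ¬ TwoUniform n k W) →
      ∀ V : Matrix (Fin n) (Fin k) ℝ, Vᵀ * V = 1 → Uniform n k V →
        (∀ W : Matrix (Fin n) (Fin k) ℝ, Wᵀ * W = 1 → Uniform n k W →
          errP V 2 2 ≤ errP W 2 2) →
        ¬ TwoUniform n k V) := by
  refine ⟨fun V hV hVt W hW hWu => errP_two_two_le_of_twoUniform hV hVt hW hWu, ?_⟩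
  rintro ⟨W, hW, hWu, hWt⟩ V hV - hmin hVt
  obtain ⟨i, j, hij, hne⟩ : ∃ i j, i ≠ j ∧ |(W * Wᵀ) i j| ≠ c n k := by
    by_contra! h
    exact hWt ⟨hWu, h⟩
  exact (errP_two_two_lt_of_twoUniform hV hVt hW hWu hij hne).not_ge (hmin W hW hWu)

end FramesErasures
end
end

section
/- Let F be a real 2-uniform (n,k)-frame with analysis operator V and associated graph G_F, and let D ∈ 𝒟_3 have its three 1's in the diagonal positions i, j, l. Then ‖VᵀDV‖ = k/n + 2·c_{n,k} if the induced subgraph of G_F on {i,j,l} has an even number of edges (equivalently, is complete bipartite), and ‖VᵀDV‖ = k/n + c_{n,k} if it has an odd number of edges. -/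
open Matrix
open scoped Classical

noncomputable section

/-!
Let `W` be the `3 × k` matrix formed by the rows `i, j, l` of `V`. Then `VᵀDV = WᵀW` and
`WWᵀ = (k/n) I + c Q_S`, where `Q_S` is the principal `3 × 3` submatrix of `Q` on `S = {i, j, l}`.
The norm of `A = WᵀW` is the largest eigenvalue `μ` of `WWᵀ`: an eigenvector `z` of `WWᵀ` yields the
eigenvector `Wᵀz` of `A`, and `‖Ax‖² = ⟨WWᵀ Wx, Wx⟩ ≤ μ ‖Wx‖² = μ ⟨Ax, x⟩` gives `‖A‖ ≤ μ`.
Up to conjugation by a diagonal `±1` matrix, `Q_S` is `J - I` or `I - J` according as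
`Q_ij Q_il Q_jl = (-1)^#edges` is `1` or `-1`, with largest eigenvalue `2` or `1` respectively.
-/

open scoped RealInnerProductSpace

namespace ContinuousLinearMap

variable {E : Type*} [NormedAddCommGroup E] [InnerProductSpace ℝ E]

theorem opNorm_le_of_norm_sq_le_inner (T : E →L[ℝ] E) {μ : ℝ} (hμ : 0 ≤ μ)
    (h : ∀ x, ‖T x‖ ^ 2 ≤ μ * ⟪T x, x⟫) : ‖T‖ ≤ μ := by
  refine T.opNorm_le_bound hμ fun x => ?_
  have hx := (h x).trans (mul_le_mul_of_nonneg_left (real_inner_le_norm (T x) x) hμ)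
  rcases (norm_nonneg (T x)).eq_or_lt with h0 | hpos
  · rw [← h0]
    positivity
  · nlinarith

theorem abs_le_opNorm_of_apply_eq_smul (T : E →L[ℝ] E) {μ : ℝ} {u : E} (hu : u ≠ 0)
    (hTu : T u = μ • u) : |μ| ≤ ‖T‖ := by
  have h := T.le_opNorm u
  rw [hTu, norm_smul, Real.norm_eq_abs] at h
  exact le_of_mul_le_mul_right h (norm_pos_iff.mpr hu)

end ContinuousLinearMap

namespace FramesErasures

section DotProduct

variable {ι R : Type*} [Fintype ι] [Ring R] [LinearOrder R] [IsStrictOrderedRing R]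

theorem dotProduct_self_nonneg (z : ι → R) : 0 ≤ z ⬝ᵥ z :=
  Finset.sum_nonneg fun a _ => mul_self_nonneg (z a)

theorem dotProduct_self_pos {z : ι → R} (hz : z ≠ 0) : 0 < z ⬝ᵥ z :=
  (dotProduct_self_nonneg z).lt_of_ne (Ne.symm (dotProduct_self_eq_zero.not.mpr hz))

end DotProduct

theorem opNorm_transpose_mul_self_eq {m k : ℕ} (W : Matrix (Fin m) (Fin k) ℝ) {μ : ℝ}
    (hle : ∀ z, z ⬝ᵥ (W * Wᵀ) *ᵥ z ≤ μ * (z ⬝ᵥ z)) {z : Fin m → ℝ} (hz : z ≠ 0)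
    (hWz : (W * Wᵀ) *ᵥ z = μ • z) : opNorm (Wᵀ * W) = μ := by
  rw [opNorm]
  set T := toEuclideanCLM (𝕜 := ℝ) (Wᵀ * W)
  have hgram : ∀ z, (Wᵀ *ᵥ z) ⬝ᵥ (Wᵀ *ᵥ z) = z ⬝ᵥ (W * Wᵀ) *ᵥ z := fun z => by
    rw [dotProduct_transpose_mulVec, mulVec_mulVec]
  have hWz2 : (Wᵀ *ᵥ z) ⬝ᵥ (Wᵀ *ᵥ z) = μ * (z ⬝ᵥ z) := by
    rw [hgram, hWz, dotProduct_smul, smul_eq_mul]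
  have hμ : 0 ≤ μ :=
    le_of_mul_le_mul_right (by rw [zero_mul, ← hWz2]; exact dotProduct_self_nonneg _)
      (dotProduct_self_pos hz)
  refine le_antisymm (T.opNorm_le_of_norm_sq_le_inner hμ fun x => ?_) ?_
  · obtain ⟨x⟩ := x
    simp only [T, toEuclideanCLM_toLp, ← real_inner_self_eq_norm_sq,
      EuclideanSpace.inner_toLp_toLp, star_trivial, ← mulVec_mulVec]
    rw [hgram, dotProduct_transpose_mulVec]
    exact hle _
  · rcases hμ.eq_or_lt with rfl | hμ
    · exact norm_nonneg _
    have hu : WithLp.toLp 2 (Wᵀ *ᵥ z) ≠ 0 := by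
      rw [ne_eq, WithLp.toLp_eq_zero, ← dotProduct_self_eq_zero, hWz2]
      exact (mul_pos hμ (dotProduct_self_pos hz)).ne'
    have hTu : T (WithLp.toLp 2 (Wᵀ *ᵥ z)) = μ • WithLp.toLp 2 (Wᵀ *ᵥ z) := by
      rw [toEuclideanCLM_toLp, ← mulVec_mulVec, mulVec_mulVec _ W, hWz, mulVec_smul,
        WithLp.toLp_smul]
    simpa [abs_of_pos hμ] using T.abs_le_opNorm_of_apply_eq_smul hu hTu

theorem transpose_mul_diagS_image_mul {m n k : ℕ} (V : Matrix (Fin n) (Fin k) ℝ)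
    {σ : Fin m → Fin n} (hσ : Function.Injective σ) :
    Vᵀ * diagS (Finset.univ.image σ) * V = (V.submatrix σ id)ᵀ * V.submatrix σ id := by
  ext p q
  rw [mul_apply, mul_apply]
  simp only [diagS, mul_diagonal, transpose_apply, submatrix_apply, id, mul_ite, ite_mul, mul_one,
    mul_zero, zero_mul]
  rw [Finset.sum_ite_mem, Finset.univ_inter, Finset.sum_image hσ.injOn]

def signature3 (a b r : ℝ) : Matrix (Fin 3) (Fin 3) ℝ :=
  !![0, a, b; a, 0, r; b, r, 0]

theorem signature3_mulVec (a b r : ℝ) (z : Fin 3 → ℝ) :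
    signature3 a b r *ᵥ z = ![a * z 1 + b * z 2, a * z 0 + r * z 2, b * z 0 + r * z 1] := by
  simp [signature3, vecHead, vecTail]

theorem dotProduct_signature3_mulVec (a b r : ℝ) (z : Fin 3 → ℝ) :
    z ⬝ᵥ signature3 a b r *ᵥ z = 2 * (a * z 0 * z 1 + b * z 0 * z 2 + r * z 1 * z 2) := by
  rw [signature3_mulVec, vec3_dotProduct]
  simp only [cons_val_zero, cons_val_one, cons_val_two, tail_cons, head_cons]
  ring

theorem signature3_mulVec_of_pos {a b : ℝ} (ha : a * a = 1) (hb : b * b = 1) :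
    signature3 a b (a * b) *ᵥ ![1, a, b] = (2 : ℝ) • ![1, a, b] := by
  rw [signature3_mulVec, smul_vec3]
  simp only [cons_val_zero, cons_val_one, cons_val_two, tail_cons, head_cons]
  refine vec3_eq ?_ ?_ ?_
  · linear_combination ha + hb
  · linear_combination a * hb
  · linear_combination b * ha

theorem signature3_mulVec_of_neg {a b : ℝ} (ha : a * a = 1) :
    signature3 a b (-(a * b)) *ᵥ ![a, 1, 0] = (1 : ℝ) • ![a, 1, 0] := by
  rw [signature3_mulVec, one_smul]
  simp only [cons_val_zero, cons_val_one, cons_val_two, tail_cons, head_cons]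
  refine vec3_eq ?_ ?_ ?_
  · ring
  · linear_combination ha
  · ring

theorem dotProduct_signature3_mulVec_le_of_pos {a b : ℝ} (ha : a * a = 1) (hb : b * b = 1)
    (z : Fin 3 → ℝ) : z ⬝ᵥ signature3 a b (a * b) *ᵥ z ≤ 2 * (z ⬝ᵥ z) := by
  rw [dotProduct_signature3_mulVec, vec3_dotProduct]
  nlinarith [sq_nonneg (z 0 - a * z 1), sq_nonneg (z 0 - b * z 2), sq_nonneg (a * z 1 - b * z 2)]

theorem dotProduct_signature3_mulVec_le_of_neg {a b : ℝ} (ha : a * a = 1) (hb : b * b = 1)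
    (z : Fin 3 → ℝ) : z ⬝ᵥ signature3 a b (-(a * b)) *ᵥ z ≤ 1 * (z ⬝ᵥ z) := by
  rw [dotProduct_signature3_mulVec, vec3_dotProduct]
  nlinarith [sq_nonneg (z 0 - a * z 1 - b * z 2)]

theorem eq_mul_mul_of_mul_mul_eq {a b r s : ℝ} (ha : a * a = 1) (hb : b * b = 1)
    (h : a * b * r = s) : r = s * (a * b) := by
  linear_combination (a * b) * h - (r * b * b) * ha - r * hb

namespace TwoUniformFrame

variable {n k : ℕ} (F : TwoUniformFrame n k)

theorem Q_comm (a b : Fin n) : F.Q a b = F.Q b a := by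
  rw [← transpose_apply F.Q b a, F.symm]

theorem Q_mul_self {a b : Fin n} (hab : a ≠ b) : F.Q a b * F.Q a b = 1 := by
  rcases F.offdiag a b hab with h | h <;> rw [h] <;> norm_num

theorem Q_eq_neg_one_pow {a b : Fin n} (hab : a ≠ b) :
    F.Q a b = (-1) ^ (if (frameGraph F).Adj a b then 1 else 0) := by
  have hadj : (frameGraph F).Adj a b ↔ F.Q a b = -1 := and_iff_right hab
  rcases F.offdiag a b hab with h | h <;> simp [hadj, h]

theorem Q_mul_Q_mul_Q_eq_neg_one_pow {i j l : Fin n} (hij : i ≠ j) (hil : i ≠ l) (hjl : j ≠ l) :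
    F.Q i j * F.Q i l * F.Q j l = (-1) ^ ((if (frameGraph F).Adj i j then 1 else 0) +
        (if (frameGraph F).Adj i l then 1 else 0) + (if (frameGraph F).Adj j l then 1 else 0)) := by
  rw [pow_add, pow_add, ← F.Q_eq_neg_one_pow hij, ← F.Q_eq_neg_one_pow hil,
    ← F.Q_eq_neg_one_pow hjl]

theorem submatrix_Q_eq_signature3 (i j l : Fin n) :
    F.Q.submatrix ![i, j, l] ![i, j, l] = signature3 (F.Q i j) (F.Q i l) (F.Q j l) := by
  ext p q
  fin_cases p <;> fin_cases q <;>
    simp [signature3, F.diag, F.Q_comm j i, F.Q_comm l i, F.Q_comm l j]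

theorem gram_submatrix {m : ℕ} {σ : Fin m → Fin n} (hσ : Function.Injective σ) :
    F.V.submatrix σ id * (F.V.submatrix σ id)ᵀ =
      ((k : ℝ) / n) • 1 + c n k • F.Q.submatrix σ σ := by
  rw [transpose_submatrix, ← submatrix_mul _ _ _ _ _ Function.bijective_id, F.gram,
    ← submatrix_one σ hσ]
  rfl

theorem opNorm_erasure_eq {m : ℕ} {σ : Fin m → Fin n} (hσ : Function.Injective σ) {μ : ℝ}
    {v : Fin m → ℝ} (hv : v ≠ 0) (hQv : F.Q.submatrix σ σ *ᵥ v = μ • v)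
    (hQ : ∀ z, z ⬝ᵥ F.Q.submatrix σ σ *ᵥ z ≤ μ * (z ⬝ᵥ z)) :
    opNorm (F.Vᵀ * diagS (Finset.univ.image σ) * F.V) = (k : ℝ) / n + μ * c n k := by
  have hc : 0 ≤ c n k := Real.sqrt_nonneg _
  rw [transpose_mul_diagS_image_mul _ hσ]
  refine opNorm_transpose_mul_self_eq _ (fun z => ?_) hv ?_ <;> rw [F.gram_submatrix hσ]
  · have := mul_le_mul_of_nonneg_left (hQ z) hc
    simp only [add_mulVec, smul_mulVec, one_mulVec, dotProduct_add, dotProduct_smul, smul_eq_mul]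
    linarith
  · rw [add_mulVec, smul_mulVec, smul_mulVec, one_mulVec, hQv, smul_smul, add_smul, mul_comm]

end TwoUniformFrame

theorem statement16 (n k : ℕ) (F : TwoUniformFrame n k) (i j l : Fin n)
    (hij : i ≠ j) (hil : i ≠ l) (hjl : j ≠ l) :
    (Even ((if (frameGraph F).Adj i j then 1 else 0) +
        (if (frameGraph F).Adj i l then 1 else 0) +
        (if (frameGraph F).Adj j l then (1 : ℕ) else 0)) →
      opNorm (F.Vᵀ * diagS ({i, j, l} : Finset (Fin n)) * F.V) =
        (k : ℝ) / n + 2 * c n k) ∧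
    (Odd ((if (frameGraph F).Adj i j then 1 else 0) +
        (if (frameGraph F).Adj i l then 1 else 0) +
        (if (frameGraph F).Adj j l then (1 : ℕ) else 0)) →
      opNorm (F.Vᵀ * diagS ({i, j, l} : Finset (Fin n)) * F.V) =
        (k : ℝ) / n + c n k) := by
  have hσ : Function.Injective ![i, j, l] := by
    intro a b h
    fin_cases a <;> fin_cases b <;> simp_all [eq_comm]
  have hS : ({i, j, l} : Finset (Fin n)) = Finset.univ.image ![i, j, l] := by
    simp [Fin.univ_image_def]
  have hsign := F.Q_mul_Q_mul_Q_eq_neg_one_pow hij hil hjl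
  have hij2 := F.Q_mul_self hij
  have hil2 := F.Q_mul_self hil
  rw [hS]
  refine ⟨fun heven => ?_, fun hodd => ?_⟩
  · have hjl' : F.Q j l = F.Q i j * F.Q i l := by
      simpa using eq_mul_mul_of_mul_mul_eq hij2 hil2 (hsign.trans heven.neg_one_pow)
    refine F.opNorm_erasure_eq hσ (v := ![1, F.Q i j, F.Q i l]) (by simp) ?_ ?_ <;>
      rw [F.submatrix_Q_eq_signature3, hjl']
    · exact signature3_mulVec_of_pos hij2 hil2
    · exact dotProduct_signature3_mulVec_le_of_pos hij2 hil2
  · have hjl' : F.Q j l = -(F.Q i j * F.Q i l) := by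
      simpa using eq_mul_mul_of_mul_mul_eq hij2 hil2 (hsign.trans hodd.neg_one_pow)
    rw [← one_mul (c n k)]
    refine F.opNorm_erasure_eq hσ (v := ![F.Q i j, 1, 0]) (by simp) ?_ ?_ <;>
      rw [F.submatrix_Q_eq_signature3, hjl']
    · exact signature3_mulVec_of_neg hij2
    · exact dotProduct_signature3_mulVec_le_of_neg hij2 hil2

end FramesErasures
end
end
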